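/- Let (X,T₁,…,T_d) be a minimal distal ℤ^d-system. Then the quotient ℤ^d-system (X/R_{T₁,…,T_d}(X), T₁,…,T_d) has the unique closing parallelepiped property, and it is the maximal factor of (X,T₁,…,T_d) with this property: for every factor map π' from (X,T₁,…,T_d) onto a ℤ^d-system (Z,T₁,…,T_d) having the unique closing parallelepiped property, π' factorizes through the quotient map X → X/R_{T₁,…,T_d}(X). -/

import Mathlib

/-!
Write `Q` for the cube space and `R` for `R_{T₁,…,T_d}(X)`. The tool is the enveloping semigroup
`E` of the action on `X^{2^d}` of `G` (diagonally) together with the face transformations: its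
elements act vertex by vertex and preserve `Q`, and distality makes `E` a group. By minimality
every cube `w` is `P (x, …, x)` for some `P ∈ E`; composing `P⁻¹` with the diagonal copy of the
base-vertex map of `P` gives an invertible `p ∈ E` that fixes the base vertex and makes `p w`
constant. With such maps one shows that `a R b` iff the cube `(b, a, …, a)` lies in `Q`, that `R`
is an equivalence relation, and that a vertex of a cube may be moved inside its `R`-class without
leaving `Q`. Hence cubes close up modulo `R`, which is the unique closing property of `X/R`; and a
factor with that property identifies `a` and `b` whenever `(b, a, …, a) ∈ Q`.
-/

open Function Set

/-- The group of self-homeomorphisms of a topological space, under composition. -/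
instance homeomorphGroup {X : Type*} [TopologicalSpace X] : Group (X ≃ₜ X) where
  mul f g := g.trans f
  one := Homeomorph.refl X
  inv := Homeomorph.symm
  mul_assoc _ _ _ := rfl
  one_mul _ := Homeomorph.ext fun _ => rfl
  mul_one _ := Homeomorph.ext fun _ => rfl
  inv_mul_cancel f := Homeomorph.self_trans_symm f

variable {d : ℕ}

/-- The homeomorphism `T₁^{n₁ε₁} ⋯ T_d^{n_dε_d}` associated with `n ∈ ℤ^d` and a vertex
`ε ∈ {0,1}^d` of the cube. -/
def cubeMap {X : Type*} [TopologicalSpace X] (T : Fin d → X ≃ₜ X)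
    (n : Fin d → ℤ) (ε : Fin d → Bool) : X ≃ₜ X :=
  ((List.finRange d).map (fun i => T i ^ (if ε i then n i else 0))).prod

/-- The space of directional dynamical cubes `Q_{T₁,…,T_d}(X)`. -/
def cubes {X : Type*} [TopologicalSpace X] (T : Fin d → X ≃ₜ X) :
    Set ((Fin d → Bool) → X) :=
  closure {y | ∃ (x : X) (n : Fin d → ℤ), ∀ ε, y ε = cubeMap T n ε x}

/-- The group of homeomorphisms generated by `T₁,…,T_d`. -/
def genGroup {X : Type*} [TopologicalSpace X] (T : Fin d → X ≃ₜ X) : Subgroup (X ≃ₜ X) :=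
  Subgroup.closure (Set.range T)

/-- Minimality: every orbit is dense. -/
def IsMinimalSystem {X : Type*} [TopologicalSpace X] (T : Fin d → X ≃ₜ X) : Prop :=
  ∀ x : X, Dense {y : X | ∃ g ∈ genGroup T, g x = y}

/-- Distality: `inf_{g ∈ G} dist (g x) (g y) > 0` whenever `x ≠ y`. -/
def IsDistalSystem {X : Type*} [MetricSpace X] (T : Fin d → X ≃ₜ X) : Prop :=
  ∀ x y : X, x ≠ y → ∃ δ > 0, ∀ g ∈ genGroup T, δ ≤ dist (g x) (g y)

/-- Unique closing parallelepiped property: two cubes agreeing in `2^d - 1` of their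
coordinates are equal. -/
def HasUCP {X : Type*} [TopologicalSpace X] (T : Fin d → X ≃ₜ X) : Prop :=
  ∀ x ∈ cubes T, ∀ y ∈ cubes T,
    ∀ ε₀ : Fin d → Bool, (∀ ε, ε ≠ ε₀ → x ε = y ε) → x = y

/-- The relation `R_{T_j}(X)`: pairs `(x,y)` for which there is a cube `z` with
`z_∅ = x`, `z_{{j}} = y` and `z_ε = z_{ε ∪ {j}}` for every nonempty `ε ⊆ [d] \ {j}`. -/
def relRT {X : Type*} [TopologicalSpace X] (T : Fin d → X ≃ₜ X) (j : Fin d) : Set (X × X) :=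
  {p | ∃ z ∈ cubes T, z (fun _ => false) = p.1 ∧ z (fun i => decide (i = j)) = p.2 ∧
    ∀ ε : Fin d → Bool, ε j = false → ε ≠ (fun _ => false) →
      z ε = z (Function.update ε j true)}

/-- The `(T₁,…,T_d)`-regionally proximal relation. -/
def relRP {X : Type*} [TopologicalSpace X] (T : Fin d → X ≃ₜ X) : Set (X × X) :=
  ⋂ j : Fin d, relRT T j

/-- The relation underlying the quotient `X/R_{T₁,…,T_d}(X)`. -/
def rpRel {X : Type*} [TopologicalSpace X] {d : ℕ} (T : Fin d → X ≃ₜ X) : X → X → Prop :=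
  fun a b => (a, b) ∈ relRP T


section MultiPower

variable {X Z : Type*} [TopologicalSpace X] [TopologicalSpace Z]

lemma zpow_apply_of_semiconj {f : X ≃ₜ X} {s : Z ≃ₜ Z} {g : X → Z}
    (h : ∀ x, g (f x) = s (g x)) (k : ℤ) (x : X) : g ((f ^ k) x) = (s ^ k) (g x) := by
  have hinv : ∀ x, g (f⁻¹ x) = s⁻¹ (g x) := fun x => by
    rw [Homeomorph.inv_apply, Homeomorph.inv_apply, Homeomorph.eq_symm_apply, ← h,
      Homeomorph.apply_symm_apply]
  induction k using Int.induction_on generalizing x with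
  | zero => rfl
  | succ k ih => rw [zpow_add_one, zpow_add_one, Homeomorph.mul_apply, Homeomorph.mul_apply, ih, h]
  | pred k ih =>
    rw [zpow_sub_one, zpow_sub_one, Homeomorph.mul_apply, Homeomorph.mul_apply, ih, hinv]

def multiZPow (T : Fin d → X ≃ₜ X) (a : Fin d → ℤ) : X ≃ₜ X :=
  ((List.finRange d).map fun i => T i ^ a i).prod

lemma cubeMap_eq_multiZPow (T : Fin d → X ≃ₜ X) (n : Fin d → ℤ) (ε : Fin d → Bool) :
    cubeMap T n ε = multiZPow T (fun i => if ε i then n i else 0) := rfl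

lemma multiZPow_apply_of_semiconj {T : Fin d → X ≃ₜ X} {S : Fin d → Z ≃ₜ Z} {g : X → Z}
    (hg : ∀ i x, g (T i x) = S i (g x)) (a : Fin d → ℤ) (x : X) :
    g (multiZPow T a x) = multiZPow S a (g x) := by
  unfold multiZPow
  induction List.finRange d generalizing x with
  | nil => rfl
  | cons j l ih =>
    simp only [List.map_cons, List.prod_cons, Homeomorph.mul_apply, ih,
      zpow_apply_of_semiconj (hg j)]

lemma cubeMap_apply_of_semiconj {T : Fin d → X ≃ₜ X} {S : Fin d → Z ≃ₜ Z} {g : X → Z}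
    (hg : ∀ i x, g (T i x) = S i (g x)) (n : Fin d → ℤ) (ε : Fin d → Bool) (x : X) :
    g (cubeMap T n ε x) = cubeMap S n ε (g x) :=
  multiZPow_apply_of_semiconj hg _ x

variable {T : Fin d → X ≃ₜ X}

lemma multiZPow_zero : multiZPow T 0 = 1 :=
  List.prod_eq_one fun _ h => by
    obtain ⟨i, -, rfl⟩ := List.mem_map.1 h
    exact zpow_zero _

lemma cubeMap_zero (ε : Fin d → Bool) : cubeMap T 0 ε = 1 := by
  rw [cubeMap_eq_multiZPow, ← multiZPow_zero (T := T)]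
  congr 1
  funext i
  simp

lemma cubeMap_base (n : Fin d → ℤ) : cubeMap T n (fun _ => false) = 1 := by
  rw [cubeMap_eq_multiZPow, ← multiZPow_zero (T := T)]
  rfl

lemma multiZPow_add (hc : ∀ i j, Commute (T i) (T j)) (a b : Fin d → ℤ) :
    multiZPow T (a + b) = multiZPow T a * multiZPow T b := by
  unfold multiZPow
  induction List.finRange d with
  | nil => simp
  | cons j l ih =>
    have hcomm : Commute (T j ^ b j) (l.map fun i => T i ^ a i).prod :=
      Commute.list_prod_right _ _ fun _ h => by
        obtain ⟨i, -, rfl⟩ := List.mem_map.1 h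
        exact (hc j i).zpow_zpow _ _
    simp only [List.map_cons, List.prod_cons]
    rw [ih, Pi.add_apply, zpow_add, hcomm.symm.mul_mul_mul_comm]

lemma cubeMap_apply_cubeMap (hc : ∀ i j, Commute (T i) (T j)) (m n : Fin d → ℤ)
    (ε η : Fin d → Bool) (x : X) :
    cubeMap T m ε (cubeMap T n η x)
      = multiZPow T (fun i => (if ε i then m i else 0) + if η i then n i else 0) x := by
  rw [cubeMap_eq_multiZPow, cubeMap_eq_multiZPow, ← Homeomorph.mul_apply, ← multiZPow_add hc]
  rfl

lemma cubeMap_add (hc : ∀ i j, Commute (T i) (T j)) (m n : Fin d → ℤ) (ε : Fin d → Bool) :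
    cubeMap T (m + n) ε = cubeMap T m ε * cubeMap T n ε := by
  simp only [cubeMap_eq_multiZPow, ← multiZPow_add hc]
  congr 1
  funext i
  cases h : ε i <;> simp [h]

lemma genGroup_le_centralizer (hc : ∀ i j, Commute (T i) (T j)) :
    genGroup T ≤ Subgroup.centralizer (genGroup T) := by
  rw [genGroup, Subgroup.centralizer_closure, Subgroup.closure_le]
  rintro _ ⟨i, rfl⟩
  exact Subgroup.mem_centralizer_iff.2 (by rintro _ ⟨j, rfl⟩; exact hc j i)

lemma genGroup_apply_comm (hc : ∀ i j, Commute (T i) (T j)) {g h : X ≃ₜ X}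
    (hg : g ∈ genGroup T) (hh : h ∈ genGroup T) (x : X) : g (h x) = h (g x) :=
  DFunLike.congr_fun (Subgroup.mem_centralizer_iff.1 (genGroup_le_centralizer hc hh) g hg) x

lemma multiZPow_mem_genGroup (a : Fin d → ℤ) : multiZPow T a ∈ genGroup T :=
  Subgroup.list_prod_mem _ fun _ h => by
    obtain ⟨i, -, rfl⟩ := List.mem_map.1 h
    exact zpow_mem (Subgroup.subset_closure (mem_range_self i)) _

lemma cubeMap_mem_genGroup (n : Fin d → ℤ) (ε : Fin d → Bool) : cubeMap T n ε ∈ genGroup T :=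
  multiZPow_mem_genGroup _

end MultiPower

def corner {X : Type*} (a b : X) : (Fin d → Bool) → X := update (fun _ => a) (fun _ => false) b

lemma corner_base {X : Type*} (a b : X) : corner a b (fun _ : Fin d => false) = b := update_self ..

lemma corner_of_ne {X : Type*} (a b : X) {ε : Fin d → Bool} (h : ε ≠ fun _ => false) :
    corner a b ε = a :=
  update_of_ne h ..

lemma corner_self {X : Type*} (a : X) : corner a a = fun _ : Fin d → Bool => a := update_eq_self ..

section Cubes

variable {X Z : Type*} [TopologicalSpace X] [TopologicalSpace Z] {T : Fin d → X ≃ₜ X}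

lemma const_mem_cubes (x : X) : (fun _ => x) ∈ cubes T :=
  subset_closure ⟨x, 0, fun ε => by rw [cubeMap_zero]; rfl⟩

lemma map_mem_cubes_of_basic {S : Fin d → Z ≃ₜ Z}
    {F : ((Fin d → Bool) → X) → (Fin d → Bool) → Z} (hF : Continuous F)
    (hbasic : ∀ x n, ∃ y m, F (fun ε => cubeMap T n ε x) = fun ε => cubeMap S m ε y)
    {z : (Fin d → Bool) → X} (hz : z ∈ cubes T) : F z ∈ cubes S := by
  refine map_mem_closure hF hz ?_
  rintro _ ⟨x, n, hy⟩
  obtain rfl : _ = fun ε => cubeMap T n ε x := funext hy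
  obtain ⟨y, m, h⟩ := hbasic x n
  exact ⟨y, m, congrFun h⟩

lemma comp_mem_cubes {S : Fin d → Z ≃ₜ Z} {g : X → Z} (hgc : Continuous g)
    (hg : ∀ i x, g (T i x) = S i (g x)) {z : (Fin d → Bool) → X} (hz : z ∈ cubes T) :
    g ∘ z ∈ cubes S :=
  map_mem_cubes_of_basic (continuous_pi fun ε => hgc.comp (continuous_apply ε))
    (fun x n => ⟨g x, n, funext fun ε => cubeMap_apply_of_semiconj hg n ε x⟩) hz

def reflect (η : Fin d → Bool) : Equiv.Perm (Fin d → Bool) :=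
  Involutive.toPerm (fun ε i => xor (η i) (ε i)) fun ε => funext fun i => by simp

@[simp] lemma reflect_apply (η ε : Fin d → Bool) (i : Fin d) :
    reflect η ε i = xor (η i) (ε i) := rfl

@[simp] lemma reflect_symm (η : Fin d → Bool) : (reflect η).symm = reflect η := rfl

lemma reflect_self (η : Fin d → Bool) : reflect η η = fun _ => false := by
  funext i; simp

lemma reflect_base (η : Fin d → Bool) : reflect η (fun _ => false) = η := by
  funext i; simp

lemma reflect_ne_self {η ε : Fin d → Bool} (h : ε ≠ fun _ => false) : reflect η ε ≠ η :=
  fun h' => h ((reflect η).injective (h'.trans (reflect_base η).symm))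

lemma reflect_comp_reflect (η : Fin d → Bool) : reflect η ∘ reflect η = id :=
  (reflect η).self_comp_symm

lemma comp_reflect_mem_cubes (hc : ∀ i j, Commute (T i) (T j)) (η : Fin d → Bool)
    {z : (Fin d → Bool) → X} (hz : z ∈ cubes T) : z ∘ reflect η ∈ cubes T := by
  refine map_mem_cubes_of_basic (F := fun z => z ∘ reflect η)
    (continuous_pi fun ε => continuous_apply _)
    (fun x n => ⟨cubeMap T n η x, fun i => if η i then -n i else n i, funext fun ε => ?_⟩) hz
  rw [comp_apply, cubeMap_apply_cubeMap hc, cubeMap_eq_multiZPow]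
  congr 2
  funext i
  rw [reflect_apply]
  cases η i <;> cases ε i <;> simp

lemma comp_update_mem_cubes (hc : ∀ i j, Commute (T i) (T j)) (j : Fin d)
    {z : (Fin d → Bool) → X} (hz : z ∈ cubes T) : (fun ε => z (update ε j true)) ∈ cubes T := by
  refine map_mem_cubes_of_basic (F := fun z ε => z (update ε j true))
    (continuous_pi fun ε => continuous_apply _)
    (fun x n => ⟨cubeMap T n (fun i => decide (i = j)) x, update n j 0, funext fun ε => ?_⟩) hz
  change cubeMap T n (update ε j true) x = _
  rw [cubeMap_apply_cubeMap hc, cubeMap_eq_multiZPow]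
  congr 2
  funext i
  by_cases hij : i = j
  · subst hij; simp
  · simp [hij]

lemma face_mem_cubes (hc : ∀ i j, Commute (T i) (T j)) (m : Fin d → ℤ)
    {z : (Fin d → Bool) → X} (hz : z ∈ cubes T) : (fun ε => cubeMap T m ε (z ε)) ∈ cubes T :=
  map_mem_cubes_of_basic (F := fun z ε => cubeMap T m ε (z ε))
    (continuous_pi fun ε => (cubeMap T m ε).continuous.comp (continuous_apply _))
    (fun x n => ⟨x, m + n, funext fun ε => by rw [cubeMap_add hc, Homeomorph.mul_apply]⟩) hz

lemma cubes_eq_image_of_factor [CompactSpace X] [T2Space Z] {S : Fin d → Z ≃ₜ Z} {π : X → Z}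
    (hπc : Continuous π) (hπs : Surjective π) (hπ : ∀ i x, π (T i x) = S i (π x)) :
    cubes S = (π ∘ ·) '' cubes T := by
  refine Subset.antisymm (closure_minimal ?_ ?_) ?_
  · rintro _ ⟨y, n, hy⟩
    obtain ⟨x, rfl⟩ := hπs y
    exact ⟨fun ε => cubeMap T n ε x, subset_closure ⟨x, n, fun _ => rfl⟩,
      funext fun ε => (cubeMap_apply_of_semiconj hπ n ε x).trans (hy ε).symm⟩
  · exact (isClosed_closure.isCompact.image
      (continuous_pi fun ε => hπc.comp (continuous_apply ε))).isClosed
  · rintro _ ⟨z, hz, rfl⟩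
    exact comp_mem_cubes hπc hπ hz

end Cubes

section Relations

variable {X Z : Type*} [TopologicalSpace X] [TopologicalSpace Z] {T : Fin d → X ≃ₜ X}

lemma relRT_map {S : Fin d → Z ≃ₜ Z} {g : X → Z} (hgc : Continuous g)
    (hg : ∀ i x, g (T i x) = S i (g x)) {j : Fin d} {a b : X} (h : (a, b) ∈ relRT T j) :
    (g a, g b) ∈ relRT S j := by
  obtain ⟨z, hz, rfl, rfl, hface⟩ := h
  exact ⟨g ∘ z, comp_mem_cubes hgc hg hz, rfl, rfl, fun ε hεj hε => congrArg g (hface ε hεj hε)⟩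

lemma rpRel_map {S : Fin d → Z ≃ₜ Z} {g : X → Z} (hgc : Continuous g)
    (hg : ∀ i x, g (T i x) = S i (g x)) {a b : X} (h : rpRel T a b) : rpRel S (g a) (g b) :=
  mem_iInter.2 fun j => relRT_map hgc hg (mem_iInter.1 h j)

lemma rpRel_apply_iff (hc : ∀ i j, Commute (T i) (T j)) {g : X ≃ₜ X} (hg : g ∈ genGroup T)
    {a b : X} : rpRel T (g a) (g b) ↔ rpRel T a b := by
  have hinv : ∀ g ∈ genGroup T, ∀ {a b}, rpRel T a b → rpRel T (g a) (g b) := fun g hg _ _ =>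
    rpRel_map g.continuous fun i x =>
      genGroup_apply_comm hc hg (Subgroup.subset_closure (mem_range_self i)) x
  refine ⟨fun h => ?_, hinv g hg⟩
  simpa using hinv g⁻¹ (inv_mem hg) h

lemma isClosed_relRT [CompactSpace X] [T2Space X] (j : Fin d) : IsClosed (relRT T j) := by
  have hK : IsCompact (cubes T ∩ {z | ∀ ε : Fin d → Bool, ε j = false →
      ε ≠ (fun _ => false) → z ε = z (update ε j true)}) := by
    refine (isClosed_closure.inter ?_).isCompact
    simp only [ofPred_forall]
    exact isClosed_iInter fun ε => isClosed_iInter fun _ => isClosed_iInter fun _ =>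
      isClosed_eq (continuous_apply _) (continuous_apply _)
  convert (hK.image (f := fun z => (z fun _ => false, z fun i => decide (i = j)))
    (by fun_prop)).isClosed using 1
  ext ⟨a, b⟩
  simp only [relRT, mem_ofPred_eq, mem_image, mem_inter_iff, Prod.mk.injEq]
  constructor
  · rintro ⟨z, hz, ha, hb, hface⟩
    exact ⟨z, ⟨hz, hface⟩, ha, hb⟩
  · rintro ⟨z, ⟨hz, hface⟩, ha, hb⟩
    exact ⟨z, hz, ha, hb, hface⟩

lemma isClosed_rpRel [CompactSpace X] [T2Space X] : IsClosed {p : X × X | rpRel T p.1 p.2} :=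
  isClosed_iInter fun j => isClosed_relRT j

lemma rpRel_of_corner_mem (hc : ∀ i j, Commute (T i) (T j)) {a b : X}
    (h : corner a b ∈ cubes T) : rpRel T a b := by
  refine mem_iInter.2 fun j => ⟨corner a b ∘ reflect (fun i => decide (i = j)),
    comp_reflect_mem_cubes hc _ h, ?_, ?_, fun ε hεj hε => ?_⟩
  · refine corner_of_ne a b fun h => ?_
    simpa [reflect_base] using congrFun h j
  · rw [comp_apply, reflect_self, corner_base]
  · have hreflect : reflect (fun i => decide (i = j)) (update ε j true) = ε := by
      funext i
      by_cases hij : i = j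
      · subst hij; simp [hεj]
      · simp [hij]
    rw [comp_apply, comp_apply, hreflect, corner_of_ne _ _ hε, corner_of_ne]
    intro h
    simpa [hεj] using congrFun h j

def rpQuot (T : Fin d → X ≃ₜ X) (hc : ∀ i j, Commute (T i) (T j)) (i : Fin d) :
    Quot (rpRel T) ≃ₜ Quot (rpRel T) :=
  Homeomorph.Quot.congr (T i) fun _ _ =>
    (rpRel_apply_iff hc (Subgroup.subset_closure (mem_range_self i))).symm

end Relations

section QuotientTopology

variable {X : Type*} [TopologicalSpace X] [CompactSpace X] {r : X → X → Prop}

lemma isClosedMap_quot_mk [T2Space X] (hr : Equivalence r)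
    (hclosed : IsClosed {p : X × X | r p.1 p.2}) :
    IsClosedMap (Quot.mk r) := by
  intro C hC
  rw [← isQuotientMap_quot_mk.isClosed_preimage]
  have hsat : Quot.mk r ⁻¹' (Quot.mk r '' C) = Prod.fst '' ({p | r p.1 p.2} ∩ Prod.snd ⁻¹' C) := by
    ext x
    constructor
    · rintro ⟨c, hc, hcx⟩
      exact ⟨(x, c), ⟨hr.eqvGen_iff.1 (Quot.eq.1 hcx.symm), hc⟩, rfl⟩
    · rintro ⟨⟨x, c⟩, ⟨hxc, hc⟩, rfl⟩
      exact ⟨c, hc, (Quot.sound hxc).symm⟩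
  rw [hsat]
  exact ((hclosed.inter (hC.preimage continuous_snd)).isCompact.image continuous_fst).isClosed

lemma t2Space_quot_of_isClosed [T2Space X] (hr : Equivalence r)
    (hclosed : IsClosed {p : X × X | r p.1 p.2}) : T2Space (Quot r) := by
  have hclass : ∀ a, IsClosed {x | r x a} := fun a =>
    hclosed.preimage (continuous_id.prodMk continuous_const)
  -- `(Quot.mk r '' Uᶜ)ᶜ` is the largest saturated subset of `U`, open as `Quot.mk r` is closed
  have hsat : ∀ {U : Set X} {a : X}, (∀ x, r x a → x ∈ U) →
      Quot.mk r a ∈ (Quot.mk r '' Uᶜ)ᶜ := by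
    rintro U a hU ⟨x, hx, hxa⟩
    exact hx (hU x (hr.eqvGen_iff.1 (Quot.eq.1 hxa)))
  have hmem : ∀ {U : Set X} {a : X}, Quot.mk r a ∈ (Quot.mk r '' Uᶜ)ᶜ → a ∈ U :=
    fun h => by_contra fun ha => h ⟨_, ha, rfl⟩
  refine t2Space_iff _ |>.2 ?_
  rintro ⟨a⟩ ⟨b⟩ hab
  have hdisj : Disjoint {x | r x a} {x | r x b} := disjoint_left.2 fun x hxa hxb =>
    hab (Quot.sound (hr.trans (hr.symm hxa) hxb))
  obtain ⟨U, V, hU, hV, haU, hbV, hUV⟩ := NormalSpace.normal _ _ (hclass a) (hclass b) hdisj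
  refine ⟨_, _, (isClosedMap_quot_mk hr hclosed _ hU.isClosed_compl).isOpen_compl,
    (isClosedMap_quot_mk hr hclosed _ hV.isClosed_compl).isOpen_compl,
    hsat fun x hx => haU hx, hsat fun x hx => hbV hx, disjoint_left.2 ?_⟩
  rintro ⟨c⟩ hcU hcV
  exact disjoint_left.1 hUV (hmem hcU) (hmem hcV)

end QuotientTopology

section EnvelopingSemigroup

variable {Y : Type*} [TopologicalSpace Y]

lemma comp_mem_closure {S : Set (Y → Y)} (hcont : ∀ f ∈ S, Continuous f)
    (hS : ∀ f ∈ S, ∀ g ∈ S, f ∘ g ∈ S) {f g : Y → Y} (hf : f ∈ closure S)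
    (hg : g ∈ closure S) : f ∘ g ∈ closure S := by
  have hleft : ∀ f ∈ S, f ∘ g ∈ closure S := fun f' hf' =>
    map_mem_closure (continuous_pi fun y => (hcont f' hf').comp (continuous_apply y)) hg (hS f' hf')
  simpa using map_mem_closure (f := (· ∘ g)) (continuous_pi fun y => continuous_apply (g y)) hf
    hleft

lemma exists_inverse_of_idempotent_eq_id [T2Space Y] {E : Set (Y → Y)} (hE : IsCompact E)
    (hcomp : ∀ f ∈ E, ∀ g ∈ E, f ∘ g ∈ E) (hidem : ∀ u ∈ E, u ∘ u = u → u = id)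
    {f : Y → Y} (hf : f ∈ E) : ∃ g ∈ E, g ∘ f = id ∧ f ∘ g = id := by
  -- Ellis–Numakura: the compact semigroup `E ∘ f` contains an idempotent, which must be `id`
  have hleft : ∀ f ∈ E, ∃ g ∈ E, g ∘ f = id := by
    intro f hf
    let : TopologicalSpace (Function.End Y) := inferInstanceAs (TopologicalSpace (Y → Y))
    have : T2Space (Function.End Y) := inferInstanceAs (T2Space (Y → Y))
    have hcont : Continuous fun g : Y → Y => g ∘ f := continuous_pi fun y => continuous_apply (f y)
    obtain ⟨_, ⟨g, hg, rfl⟩, hidem'⟩ := exists_idempotent_in_compact_subsemigroup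
      (M := Function.End Y) (fun r => continuous_pi fun y => continuous_apply (r y))
      ((· ∘ f) '' E) ⟨_, mem_image_of_mem _ hf⟩ (hE.image hcont)
      (by rintro _ ⟨a, ha, rfl⟩ _ ⟨b, hb, rfl⟩
          exact ⟨a ∘ f ∘ b, hcomp _ ha _ (hcomp _ hf _ hb), rfl⟩)
    exact ⟨g, hg, hidem _ (hcomp _ hg _ hf) hidem'⟩
  obtain ⟨g, hg, hgf⟩ := hleft f hf
  obtain ⟨h, -, hhg⟩ := hleft g hg
  have hfh : f = h := by rw [← id_comp f, ← hhg, comp_assoc, hgf, comp_id]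
  exact ⟨g, hg, hgf, hfh ▸ hhg⟩

lemma eq_id_of_comp_self_of_mem_closure {Y : Type*} [MetricSpace Y] {S : Set (Y → Y)}
    (hS : ∀ y y', y ≠ y' → ∃ δ > 0, ∀ f ∈ S, δ ≤ dist (f y) (f y')) {u : Y → Y}
    (hu : u ∈ closure S) (huu : u ∘ u = u) : u = id := by
  funext y
  by_contra hne
  obtain ⟨δ, hδ, hsep⟩ := hS y (u y) (Ne.symm hne)
  have hopen : IsOpen {f : Y → Y | dist (f y) (f (u y)) < δ} :=
    isOpen_lt (by fun_prop) continuous_const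
  -- `u` identifies `y` and `u y`, so the pair `(y, u y)` would be proximal
  have hu' : u ∈ {f : Y → Y | dist (f y) (f (u y)) < δ} := by
    change dist (u y) ((u ∘ u) y) < δ
    rwa [huu, dist_self]
  obtain ⟨f, hf, hfS⟩ := _root_.mem_closure_iff.1 hu _ hopen hu'
  exact (hsep f hfS).not_gt hf

end EnvelopingSemigroup

section CubeEllis

variable {X : Type*} [TopologicalSpace X] {T : Fin d → X ≃ₜ X}

/-- The diagonal action of `g` followed by the face transformation with exponent `m`. -/
def cubeAct (T : Fin d → X ≃ₜ X) (g : X ≃ₜ X) (m : Fin d → ℤ) :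
    ((Fin d → Bool) → X) → (Fin d → Bool) → X :=
  fun u ε => cubeMap T m ε (g (u ε))

/-- The enveloping semigroup of the action of `G` and of the face transformations on
`X^{2^d}`. -/
def cubeEllis (T : Fin d → X ≃ₜ X) : Set (((Fin d → Bool) → X) → (Fin d → Bool) → X) :=
  closure {Ξ | ∃ g ∈ genGroup T, ∃ m, Ξ = cubeAct T g m}

lemma continuous_cubeAct (g : X ≃ₜ X) (m : Fin d → ℤ) : Continuous (cubeAct T g m) :=
  continuous_pi fun ε => (cubeMap T m ε).continuous.comp (g.continuous.comp (continuous_apply ε))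

lemma cubeAct_comp (hc : ∀ i j, Commute (T i) (T j)) {g : X ≃ₜ X} (hg : g ∈ genGroup T)
    (g' : X ≃ₜ X) (m m' : Fin d → ℤ) :
    cubeAct T g m ∘ cubeAct T g' m' = cubeAct T (g * g') (m + m') := by
  funext u ε
  simp only [cubeAct, comp_apply, cubeMap_add hc, Homeomorph.mul_apply,
    genGroup_apply_comm hc hg (cubeMap_mem_genGroup m' ε)]

lemma cubeAct_mem_cubes (hc : ∀ i j, Commute (T i) (T j)) {g : X ≃ₜ X} (hg : g ∈ genGroup T)
    (m : Fin d → ℤ) {u : (Fin d → Bool) → X} (hu : u ∈ cubes T) : cubeAct T g m u ∈ cubes T :=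
  face_mem_cubes hc m (comp_mem_cubes g.continuous
    (fun i x => genGroup_apply_comm hc hg (Subgroup.subset_closure (mem_range_self i)) x) hu)

lemma comp_mem_cubeEllis (hc : ∀ i j, Commute (T i) (T j)) {Θ Θ'}
    (hΘ : Θ ∈ cubeEllis T) (hΘ' : Θ' ∈ cubeEllis T) : Θ ∘ Θ' ∈ cubeEllis T := by
  refine comp_mem_closure ?_ ?_ hΘ hΘ'
  · rintro _ ⟨g, -, m, rfl⟩
    exact continuous_cubeAct g m
  · rintro _ ⟨g, hg, m, rfl⟩ _ ⟨g', hg', m', rfl⟩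
    exact ⟨g * g', mul_mem hg hg', m + m', cubeAct_comp hc hg g' m m'⟩

lemma apply_eq_of_mem_cubeEllis [T2Space X] {Θ} (hΘ : Θ ∈ cubeEllis T)
    {u v : (Fin d → Bool) → X} {ε : Fin d → Bool} (h : u ε = v ε) : Θ u ε = Θ v ε := by
  have hclosed : IsClosed {Ξ : ((Fin d → Bool) → X) → (Fin d → Bool) → X |
      ∀ u v ε, u ε = v ε → Ξ u ε = Ξ v ε} := by
    simp only [ofPred_forall]
    exact isClosed_iInter fun u => isClosed_iInter fun v => isClosed_iInter fun ε =>
      isClosed_iInter fun _ => isClosed_eq (by fun_prop) (by fun_prop)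
  refine closure_minimal ?_ hclosed hΘ u v ε h
  rintro _ ⟨g, -, m, rfl⟩ u v ε h
  simp only [cubeAct, h]

lemma mapsTo_cubes_of_mem_cubeEllis (hc : ∀ i j, Commute (T i) (T j)) {Θ}
    (hΘ : Θ ∈ cubeEllis T) : MapsTo Θ (cubes T) (cubes T) := by
  have hclosed : IsClosed {Ξ : ((Fin d → Bool) → X) → (Fin d → Bool) → X |
      MapsTo Ξ (cubes T) (cubes T)} := by
    simp only [MapsTo, ofPred_forall]
    exact isClosed_iInter fun u => isClosed_iInter fun _ =>
      isClosed_closure.preimage (continuous_apply u)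
  refine closure_minimal ?_ hclosed hΘ
  rintro _ ⟨g, hg, m, rfl⟩ u hu
  exact cubeAct_mem_cubes hc hg m hu

lemma isCompact_cubeEllis [CompactSpace X] : IsCompact (cubeEllis T) :=
  isClosed_closure.isCompact

/-- The map acting on every vertex as `Θ` acts on the base vertex. -/
def baseDiag (Θ : ((Fin d → Bool) → X) → (Fin d → Bool) → X) :
    ((Fin d → Bool) → X) → (Fin d → Bool) → X :=
  fun u ε => Θ (fun _ => u ε) fun _ => false

lemma baseDiag_mem_cubeEllis {Θ} (hΘ : Θ ∈ cubeEllis T) : baseDiag Θ ∈ cubeEllis T := by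
  refine map_mem_closure (f := baseDiag) (continuous_pi fun u => continuous_pi fun ε =>
    (continuous_apply _).comp (continuous_apply _)) hΘ ?_
  rintro _ ⟨g, hg, m, rfl⟩
  exact ⟨g, hg, 0, funext fun u => funext fun ε => by simp [baseDiag, cubeAct, cubeMap_zero,
    cubeMap_base]⟩

lemma exists_mem_cubeEllis_apply_const [CompactSpace X] [T2Space X] (hmin : IsMinimalSystem T)
    (b : X) {w : (Fin d → Bool) → X} (hw : w ∈ cubes T) :
    ∃ P ∈ cubeEllis T, P (fun _ => b) = w := by
  have hclosed : IsClosed ((fun Θ => Θ fun _ => b) '' cubeEllis T) :=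
    (isCompact_cubeEllis.image (continuous_apply _)).isClosed
  refine closure_minimal ?_ hclosed hw
  rintro _ ⟨x, n, hy⟩
  obtain rfl : _ = fun ε => cubeMap T n ε x := funext hy
  refine hclosed.closure_subset (map_mem_closure (f := fun x ε => cubeMap T n ε x)
    (continuous_pi fun ε => (cubeMap T n ε).continuous) (hmin b x) ?_)
  rintro _ ⟨g, hg, rfl⟩
  exact ⟨cubeAct T g n, subset_closure ⟨g, hg, n, rfl⟩, rfl⟩

end CubeEllis

section MinimalDistal

variable {X : Type*} [MetricSpace X] [CompactSpace X] {T : Fin d → X ≃ₜ X}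

lemma exists_inverse_of_mem_cubeEllis (hc : ∀ i j, Commute (T i) (T j))
    (hdist : IsDistalSystem T) {Θ} (hΘ : Θ ∈ cubeEllis T) :
    ∃ Θ' ∈ cubeEllis T, Θ' ∘ Θ = id ∧ Θ ∘ Θ' = id := by
  refine exists_inverse_of_idempotent_eq_id isCompact_cubeEllis
    (fun _ h _ h' => comp_mem_cubeEllis hc h h')
    (fun u hu huu => eq_id_of_comp_self_of_mem_closure ?_ hu huu) hΘ
  intro u v huv
  obtain ⟨ε, hε⟩ := ne_iff.1 huv
  obtain ⟨δ, hδ, hsep⟩ := hdist _ _ hε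
  refine ⟨δ, hδ, ?_⟩
  rintro _ ⟨g, hg, m, rfl⟩
  exact (hsep _ (mul_mem (cubeMap_mem_genGroup m ε) hg)).trans
    (dist_le_pi_dist (cubeAct T g m u) (cubeAct T g m v) ε)

lemma exists_straightening (hc : ∀ i j, Commute (T i) (T j)) (hmin : IsMinimalSystem T)
    (hdist : IsDistalSystem T) {w : (Fin d → Bool) → X} (hw : w ∈ cubes T) :
    ∃ p ∈ cubeEllis T, ∃ p' ∈ cubeEllis T, p' ∘ p = id ∧
      (∀ u, p u (fun _ => false) = u fun _ => false) ∧
      (∀ u, p' u (fun _ => false) = u fun _ => false) ∧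
      p w = fun _ => w fun _ => false := by
  obtain ⟨P, hP, hPw⟩ := exists_mem_cubeEllis_apply_const hmin (w fun _ => false) hw
  obtain ⟨P', hP', hP'P, hPP'⟩ := exists_inverse_of_mem_cubeEllis hc hdist hP
  -- `P⁻¹` moves the base vertex by `ζ⁻¹`, `ζ` the base-vertex map of `P`; `ζ` at every vertex
  -- restores it
  have hp : baseDiag P ∘ P' ∈ cubeEllis T := comp_mem_cubeEllis hc (baseDiag_mem_cubeEllis hP) hP'
  obtain ⟨p', hp', hp'p, hpp'⟩ := exists_inverse_of_mem_cubeEllis hc hdist hp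
  have hbase : ∀ u, (baseDiag P ∘ P') u (fun _ => false) = u fun _ => false := fun u =>
    show P (fun _ => P' u _) _ = _ from
      (apply_eq_of_mem_cubeEllis hP (u := fun _ => P' u fun _ => false) (v := P' u) rfl).trans
        (congrFun (congrFun hPP' u) _)
  have hP'w : P' w = fun _ => w fun _ => false := by
    conv_lhs => rw [← hPw]
    exact congrFun hP'P _
  refine ⟨_, hp, p', hp', hp'p, hbase, fun u => ?_, ?_⟩
  · rw [← hbase (p' u)]
    exact congrFun (congrFun hpp' u) _
  · funext ε
    simp only [comp_apply, baseDiag, hP'w, hPw]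

lemma corner_mem_cubes_of_eq_off_base (hc : ∀ i j, Commute (T i) (T j))
    (hmin : IsMinimalSystem T) (hdist : IsDistalSystem T) {ζ ζ' : (Fin d → Bool) → X}
    (hζ : ζ ∈ cubes T) (hζ' : ζ' ∈ cubes T) (h : ∀ ε, ε ≠ (fun _ => false) → ζ ε = ζ' ε) :
    corner (ζ fun _ => false) (ζ' fun _ => false) ∈ cubes T := by
  obtain ⟨p, hp, -, -, -, hbase, -, hpζ⟩ := exists_straightening hc hmin hdist hζ
  convert mapsTo_cubes_of_mem_cubeEllis hc hp hζ'
  funext ε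
  by_cases hε : ε = fun _ => false
  · rw [hε, corner_base, hbase]
  · rw [corner_of_ne _ _ hε, ← apply_eq_of_mem_cubeEllis hp (h ε hε), hpζ]

lemma update_base_mem_cubes (hc : ∀ i j, Commute (T i) (T j)) (hmin : IsMinimalSystem T)
    (hdist : IsDistalSystem T) {w : (Fin d → Bool) → X} (hw : w ∈ cubes T) {v : X}
    (h : corner (w fun _ => false) v ∈ cubes T) : update w (fun _ => false) v ∈ cubes T := by
  obtain ⟨p, -, p', hp', hp'p, -, hbase', hpw⟩ := exists_straightening hc hmin hdist hw
  convert mapsTo_cubes_of_mem_cubeEllis hc hp' h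
  funext ε
  by_cases hε : ε = fun _ => false
  · rw [hε, update_self, hbase', corner_base]
  · rw [update_of_ne hε]
    refine (congrFun (congrFun hp'p w) ε).symm.trans (apply_eq_of_mem_cubeEllis hp' ?_)
    rw [hpw, corner_of_ne _ _ hε]

lemma corner_mem_of_rpRel (hc : ∀ i j, Commute (T i) (T j)) (hmin : IsMinimalSystem T)
    (hdist : IsDistalSystem T) {a b : X} (h : rpRel T a b) : corner a b ∈ cubes T := by
  rcases isEmpty_or_nonempty (Fin d) with hd | ⟨⟨j⟩⟩
  · convert const_mem_cubes (T := T) b using 1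
    funext ε
    rw [Subsingleton.elim ε fun _ => false, corner_base]
  obtain ⟨z, hz, rfl, rfl, hface⟩ := mem_iInter.1 h j
  have hupd : update (fun _ : Fin d => false) j true = fun i => decide (i = j) := by
    funext i
    by_cases hij : i = j
    · subst hij; simp
    · simp [hij]
  convert corner_mem_cubes_of_eq_off_base hc hmin hdist hz (comp_update_mem_cubes hc j hz)
    (fun ε hε => ?_) using 2
  · rw [hupd]
  · by_cases hεj : ε j = false
    · exact hface ε hεj hε
    · rw [Bool.not_eq_false] at hεj
      rw [← hεj, update_eq_self]

theorem rpRel_iff_corner_mem (hc : ∀ i j, Commute (T i) (T j)) (hmin : IsMinimalSystem T)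
    (hdist : IsDistalSystem T) {a b : X} : rpRel T a b ↔ corner a b ∈ cubes T :=
  ⟨corner_mem_of_rpRel hc hmin hdist, rpRel_of_corner_mem hc⟩

theorem rpRel_equivalence (hc : ∀ i j, Commute (T i) (T j)) (hmin : IsMinimalSystem T)
    (hdist : IsDistalSystem T) : Equivalence (rpRel T) := by
  have hsymm : ∀ {a b : X}, corner a b ∈ cubes T → corner b a ∈ cubes T := fun {a b} h => by
    simpa [corner_base] using corner_mem_cubes_of_eq_off_base hc hmin hdist h (const_mem_cubes a)
      fun ε hε => corner_of_ne a b hε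
  refine ⟨fun a => ?_, fun h => ?_, fun hab hbc => ?_⟩ <;>
    simp only [rpRel_iff_corner_mem hc hmin hdist] at *
  · exact corner_self (d := d) a ▸ const_mem_cubes a
  · exact hsymm h
  simpa [corner_base] using corner_mem_cubes_of_eq_off_base hc hmin hdist (hsymm hab) hbc
    fun ε hε => by rw [corner_of_ne _ _ hε, corner_of_ne _ _ hε]

lemma update_mem_cubes_of_rpRel (hc : ∀ i j, Commute (T i) (T j)) (hmin : IsMinimalSystem T)
    (hdist : IsDistalSystem T) {w : (Fin d → Bool) → X} (hw : w ∈ cubes T) (ε₁ : Fin d → Bool)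
    {v : X} (h : rpRel T (w ε₁) v) : update w ε₁ v ∈ cubes T := by
  have hbase : (w ∘ reflect ε₁) (fun _ => false) = w ε₁ := by rw [comp_apply, reflect_base]
  have hmoved := update_base_mem_cubes hc hmin hdist (comp_reflect_mem_cubes hc ε₁ hw) (v := v)
    (hbase ▸ corner_mem_of_rpRel hc hmin hdist h)
  convert comp_reflect_mem_cubes hc ε₁ hmoved using 1
  rw [update_comp_equiv, reflect_symm, reflect_base, comp_assoc, reflect_comp_reflect, comp_id]

lemma piecewise_mem_cubes (hc : ∀ i j, Commute (T i) (T j)) (hmin : IsMinimalSystem T)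
    (hdist : IsDistalSystem T) (z : (Fin d → Bool) → X) {w : (Fin d → Bool) → X}
    (hw : w ∈ cubes T) (s : Finset (Fin d → Bool)) (h : ∀ ε ∈ s, rpRel T (w ε) (z ε)) :
    s.piecewise z w ∈ cubes T := by
  induction s using Finset.induction_on with
  | empty => simpa using hw
  | insert ε s hε ih =>
    rw [Finset.piecewise_insert]
    refine update_mem_cubes_of_rpRel hc hmin hdist
      (ih fun ε' h' => h ε' (Finset.mem_insert_of_mem h')) ε ?_
    rw [Finset.piecewise_eq_of_notMem _ _ _ hε]
    exact h ε (Finset.mem_insert_self ε s)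

theorem rpRel_of_forall_ne (hc : ∀ i j, Commute (T i) (T j)) (hmin : IsMinimalSystem T)
    (hdist : IsDistalSystem T) {z w : (Fin d → Bool) → X} (hz : z ∈ cubes T) (hw : w ∈ cubes T)
    (ε₀ : Fin d → Bool) (h : ∀ ε, ε ≠ ε₀ → rpRel T (z ε) (w ε)) : rpRel T (z ε₀) (w ε₀) := by
  set w' := (Finset.univ.erase ε₀).piecewise z w
  have hw' : w' ∈ cubes T := piecewise_mem_cubes hc hmin hdist z hw _ fun ε hε =>
    (rpRel_equivalence hc hmin hdist).symm (h ε (Finset.ne_of_mem_erase hε))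
  have hw'ε₀ : w' ε₀ = w ε₀ := Finset.piecewise_eq_of_notMem _ _ _ (Finset.notMem_erase ε₀ _)
  have hagree : ∀ ε, ε ≠ ε₀ → z ε = w' ε := fun ε hε =>
    (Finset.piecewise_eq_of_mem _ _ _ (Finset.mem_erase.2 ⟨hε, Finset.mem_univ _⟩)).symm
  rw [← hw'ε₀, rpRel_iff_corner_mem hc hmin hdist]
  simpa [reflect_base] using corner_mem_cubes_of_eq_off_base hc hmin hdist
    (comp_reflect_mem_cubes hc ε₀ hz) (comp_reflect_mem_cubes hc ε₀ hw')
    fun ε hε => hagree _ (reflect_ne_self hε)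

theorem hasUCP_rpQuot (hc : ∀ i j, Commute (T i) (T j)) (hmin : IsMinimalSystem T)
    (hdist : IsDistalSystem T) : HasUCP (rpQuot T hc) := by
  have hr := rpRel_equivalence hc hmin hdist
  have := t2Space_quot_of_isClosed hr isClosed_rpRel
  have hcubes := cubes_eq_image_of_factor (S := rpQuot T hc) continuous_quot_mk
    Quot.mk_surjective fun _ _ => rfl
  intro _ hz _ hw ε₀ h
  rw [hcubes] at hz hw
  obtain ⟨z, hz, rfl⟩ := hz
  obtain ⟨w, hw, rfl⟩ := hw
  funext ε
  by_cases hε : ε = ε₀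
  · subst hε
    exact Quot.sound (rpRel_of_forall_ne hc hmin hdist hz hw ε fun ε' hε' =>
      hr.eqvGen_iff.1 (Quot.eq.1 (h ε' hε')))
  · exact h ε hε

theorem apply_eq_of_rpRel_of_hasUCP (hc : ∀ i j, Commute (T i) (T j))
    (hmin : IsMinimalSystem T) (hdist : IsDistalSystem T) {Z : Type*} [TopologicalSpace Z]
    {S : Fin d → Z ≃ₜ Z} {π : X → Z} (hπc : Continuous π) (hπ : ∀ i x, π (T i x) = S i (π x))
    (hS : HasUCP S) {a b : X} (h : rpRel T a b) : π a = π b := by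
  have hcorner := comp_mem_cubes hπc hπ (corner_mem_of_rpRel hc hmin hdist h)
  have := hS _ (const_mem_cubes (π a)) _ hcorner (fun _ => false) fun ε hε => by
    simp [corner_of_ne _ _ hε]
  simpa [corner_base] using congrFun this fun _ => false

end MinimalDistal

/-- **Corollary `prop5`.**  For a minimal distal `ℤ^d`-system, the quotient
`X/R_{T₁,…,T_d}(X)` carries an induced `ℤ^d`-system structure which has the unique closing
parallelepiped property, and it is the maximal factor with this property: any factor map
`π'` onto a `ℤ^d`-system with the unique closing parallelepiped property factorizes through
the quotient map. -/
theorem maximal_ucp_factor {X : Type*} [MetricSpace X] [CompactSpace X] {d : ℕ}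
    (T : Fin d → X ≃ₜ X)
    (hcomm : ∀ i j : Fin d, ∀ x : X, T i (T j x) = T j (T i x))
    (hmin : IsMinimalSystem T) (hdist : IsDistalSystem T) :
    ∃ TQ : Fin d → (Quot (rpRel T) ≃ₜ Quot (rpRel T)),
      (∀ (i : Fin d) (x : X), TQ i (Quot.mk (rpRel T) x) = Quot.mk (rpRel T) (T i x)) ∧
      HasUCP TQ ∧
      ∀ (Z : Type*) [MetricSpace Z] [CompactSpace Z] (SZ : Fin d → Z ≃ₜ Z),
        (∀ i j : Fin d, ∀ z : Z, SZ i (SZ j z) = SZ j (SZ i z)) →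
        ∀ π' : X → Z, Continuous π' → Function.Surjective π' →
          (∀ (i : Fin d) (x : X), π' (T i x) = SZ i (π' x)) →
          HasUCP SZ →
          ∃ ψ : Quot (rpRel T) → Z, Continuous ψ ∧
            (∀ x : X, ψ (Quot.mk (rpRel T) x) = π' x) ∧
            ∀ (i : Fin d) (q : Quot (rpRel T)), ψ (TQ i q) = SZ i (ψ q) := by
  have hc : ∀ i j, Commute (T i) (T j) := fun i j => Homeomorph.ext (hcomm i j)
  refine ⟨rpQuot T hc, fun _ _ => rfl, hasUCP_rpQuot hc hmin hdist, ?_⟩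
  intro Z _ _ SZ _ π' hπc _ hπ hUCP
  refine ⟨Quot.lift π' fun _ _ => apply_eq_of_rpRel_of_hasUCP hc hmin hdist hπc hπ hUCP,
    continuous_quot_lift _ hπc, fun _ => rfl, ?_⟩
  rintro i ⟨x⟩
  exact hπ i x
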